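/- arXiv:2107.04102 — 3 statements merged into one kernel-verified Lean document; each statement's English description precedes it below -/
import Mathlib

section
/- Let R ⊆ S be a ring extension that splits at an intermediate ring T (MSupp_R(T/R) ∩ MSupp_R(S/T) = ∅), with complement T°. Then T° is the largest intermediate ring V of R ⊆ S satisfying V ∩ T = R; that is, T° ∩ T = R, and every intermediate ring V with V ∩ T = R is contained in T°. -/
variable {R S : Type*} [CommRing R] [CommRing S] [Algebra R S]

/-- For intermediate rings `A ≤ B` of the extension `R ⊆ S`, `MSupp A B` is the set of
maximal ideals `M` of `R` at which the localization of the `R`-module `B/A` is nonzero: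
the class of `x ∈ B` is nonzero in `(B/A)_M` iff `s • x ∉ A` for all `s ∉ M`. -/
def MSupp (A B : Subalgebra R S) : Set (Ideal R) :=
  {M | M.IsMaximal ∧ ∃ x ∈ B, ∀ s : R, s ∉ M → s • x ∉ A}

/-!
Both assertions are checked locally at each maximal ideal `M` of `R`. If `M` lies in
`MSupp(T/R)`, then `T'_M = R_M`, and the splitting gives `T_M = S_M`, so that
`V_M = (V ∩ T)_M = R_M`. Otherwise `T_M = R_M` and `T'_M = S_M`. In either case
`(T' ∩ T)_M = R_M` and `V_M ⊆ T'_M`.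
-/

theorem Subalgebra.mem_of_forall_isMaximal_exists_smul_mem (A : Subalgebra R S) (x : S)
    (h : ∀ M : Ideal R, M.IsMaximal → ∃ s ∉ M, s • x ∈ A) : x ∈ A := by
  let I : Ideal R := (Subalgebra.toSubmodule A).comap (LinearMap.toSpanSingleton R S x)
  have hI : I = ⊤ := by
    by_contra hne
    obtain ⟨M, hM, hIM⟩ := I.exists_le_maximal hne
    obtain ⟨s, hsM, hsA⟩ := h M hM
    exact hsM (hIM hsA)
  simpa [I] using (Ideal.eq_top_iff_one I).1 hI

theorem exists_smul_mem_of_notMem_MSupp {A B : Subalgebra R S} {M : Ideal R} (hM : M.IsMaximal)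
    (hMAB : M ∉ MSupp A B) {x : S} (hx : x ∈ B) : ∃ s ∉ M, s • x ∈ A := by
  by_contra! h
  exact hMAB ⟨hM, x, hx, h⟩

/-- If `R ⊆ S` splits at `T` with complement `T'`, then `T'` is the largest intermediate
ring `V` with `V ∩ T = R`. -/
theorem complement_largest (T T' : Subalgebra R S)
    (hsplit : MSupp (⊥ : Subalgebra R S) T ∩ MSupp T (⊤ : Subalgebra R S) = ∅)
    (hR : ∀ M ∈ MSupp (⊥ : Subalgebra R S) T, ∀ x ∈ T', ∃ s : R, s ∉ M ∧
      s • x ∈ (⊥ : Subalgebra R S))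
    (hS : ∀ M : Ideal R, M.IsMaximal → M ∉ MSupp (⊥ : Subalgebra R S) T →
      ∀ x : S, ∃ s : R, s ∉ M ∧ s • x ∈ T') :
    T' ⊓ T = ⊥ ∧ ∀ V : Subalgebra R S, V ⊓ T = ⊥ → V ≤ T' := by
  constructor
  · refine eq_bot_iff.2 fun x ⟨hxT', hxT⟩ => ?_
    refine Subalgebra.mem_of_forall_isMaximal_exists_smul_mem _ x fun M hM => ?_
    by_cases hMT : M ∈ MSupp ⊥ T
    · exact hR M hMT x hxT'
    · exact exists_smul_mem_of_notMem_MSupp hM hMT hxT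
  · intro V hV x hxV
    refine Subalgebra.mem_of_forall_isMaximal_exists_smul_mem _ x fun M hM => ?_
    by_cases hMT : M ∈ MSupp ⊥ T
    · have hMS : M ∉ MSupp T ⊤ := fun hMS => (hsplit ▸ ⟨hMT, hMS⟩ : M ∈ (∅ : Set (Ideal R)))
      obtain ⟨s, hsM, hsx⟩ := exists_smul_mem_of_notMem_MSupp hM hMS Algebra.mem_top
      have hsxR : s • x ∈ V ⊓ T := ⟨V.smul_mem hxV s, hsx⟩
      exact ⟨s, hsM, (bot_le : ⊥ ≤ T') (hV ▸ hsxR)⟩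
    · exact hS M hM hMT x
end

section
/- Let R ⊆ S be a ring extension and T an intermediate ring such that MSupp_R(T/R) ∩ MSupp_R(S/T) = ∅, with complement T° (so T°_M = R_M for M ∈ MSupp_R(T/R) and T°_M = S_M for all other maximal ideals of R). Then the map ψ₁ : [R, T°] → [T, S] defined by ψ₁(V) := V·T (the compositum inside S) is a bijection which preserves and reflects inclusion (an order isomorphism). -/
/-!
Order reflection (hence injectivity) and surjectivity of `V ↦ V ⊔ T` both reduce to
inclusions of subalgebras, which can be checked locally at every maximal ideal `M` of `R`.
At `M ∈ MSupp ⊥ T` the complement `T'` is locally `R`, while `S` is locally `T` because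
`M ∉ MSupp T ⊤`; at any other `M`, `T` is locally `R` and `T'` is locally `S`. In each case
one side of the compositum collapses and the inclusion becomes evident.
-/

variable {R S : Type*} [CommRing R] [CommRing S] [Algebra R S]

namespace Subalgebra

/-- The elements of `S` that some scalar of `P` multiplies into `V`; for `P = M.primeCompl`
this is the preimage of `V_M` in `S_M`. -/
def smulSaturation (V : Subalgebra R S) (P : Submonoid R) : Subalgebra R S where
  carrier := {x | ∃ s ∈ P, s • x ∈ V}
  mul_mem' := by
    rintro a b ⟨s, hs, hsa⟩ ⟨t, ht, htb⟩
    exact ⟨s * t, P.mul_mem hs ht, smul_mul_smul_comm s a t b ▸ V.mul_mem hsa htb⟩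
  add_mem' := by
    rintro a b ⟨s, hs, hsa⟩ ⟨t, ht, htb⟩
    refine ⟨s * t, P.mul_mem hs ht, ?_⟩
    have hexpand : (s * t) • (a + b) = t • (s • a) + s • (t • b) := by module
    exact hexpand ▸ V.add_mem (V.smul_mem hsa t) (V.smul_mem htb s)
  algebraMap_mem' r := ⟨1, P.one_mem, by simp⟩

variable {U V W : Subalgebra R S} {P : Submonoid R}

lemma le_smulSaturation : V ≤ V.smulSaturation P :=
  fun x hx => ⟨1, P.one_mem, by simp [hx]⟩

lemma smulSaturation_mono (h : U ≤ V) : U.smulSaturation P ≤ V.smulSaturation P :=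
  fun _ ⟨s, hs, hsx⟩ => ⟨s, hs, h hsx⟩

lemma le_smulSaturation_inf (h : W ≤ V.smulSaturation P) :
    W ≤ (W ⊓ V).smulSaturation P := by
  intro x hx
  obtain ⟨s, hs, hsx⟩ := h hx
  exact ⟨s, hs, W.smul_mem hx s, hsx⟩

lemma sup_le_smulSaturation (h : U ≤ V.smulSaturation P) :
    V ⊔ U ≤ V.smulSaturation P :=
  sup_le le_smulSaturation h

lemma le_of_forall_le_smulSaturation
    (h : ∀ (M : Ideal R) [M.IsMaximal], U ≤ V.smulSaturation M.primeCompl) : U ≤ V := by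
  intro x hx
  by_contra hxV
  have hne : V.toSubmodule.colon {x} ≠ ⊤ := fun htop =>
    hxV (by simpa using (htop ▸ Submodule.mem_top : (1 : R) ∈ V.toSubmodule.colon {x}))
  obtain ⟨M, hM, hle⟩ := Ideal.exists_le_maximal _ hne
  obtain ⟨s, hs, hsx⟩ := h M hx
  exact hs (hle (Submodule.mem_colon_singleton.2 hsx))

end Subalgebra

open Subalgebra

lemma le_smulSaturation_of_notMem_MSupp {A B : Subalgebra R S} {M : Ideal R}
    [hM : M.IsMaximal] (hMA : M ∉ MSupp A B) : B ≤ A.smulSaturation M.primeCompl := by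
  intro x hx
  by_contra hx'
  exact hMA ⟨hM, x, hx, fun s hs hsx => hx' ⟨s, hs, hsx⟩⟩

section Split

variable {T T' : Subalgebra R S}

lemma le_of_sup_le_sup
    (hR : ∀ (M : Ideal R) [M.IsMaximal], M ∈ MSupp (⊥ : Subalgebra R S) T →
      T' ≤ (⊥ : Subalgebra R S).smulSaturation M.primeCompl)
    {U V : Subalgebra R S} (hU : U ≤ T') (h : U ⊔ T ≤ V ⊔ T) : U ≤ V := by
  refine le_of_forall_le_smulSaturation fun M _ => ?_
  by_cases hMT : M ∈ MSupp (⊥ : Subalgebra R S) T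
  · exact hU.trans ((hR M hMT).trans (smulSaturation_mono bot_le))
  · have hT : T ≤ V.smulSaturation M.primeCompl :=
      (le_smulSaturation_of_notMem_MSupp hMT).trans (smulSaturation_mono bot_le)
    exact le_sup_left.trans (h.trans (sup_le_smulSaturation hT))

lemma inf_sup_eq_of_le
    (hsplit : MSupp (⊥ : Subalgebra R S) T ∩ MSupp T (⊤ : Subalgebra R S) = ∅)
    (hS : ∀ (M : Ideal R) [M.IsMaximal], M ∉ MSupp (⊥ : Subalgebra R S) T →
      ⊤ ≤ T'.smulSaturation M.primeCompl)
    {W : Subalgebra R S} (hTW : T ≤ W) : W ⊓ T' ⊔ T = W := by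
  refine le_antisymm (sup_le inf_le_left hTW) (le_of_forall_le_smulSaturation fun M _ => ?_)
  by_cases hMT : M ∈ MSupp (⊥ : Subalgebra R S) T
  · have hMT' : M ∉ MSupp T ⊤ := fun h =>
      (hsplit.subset ⟨hMT, h⟩ : M ∈ (∅ : Set (Ideal R)))
    exact le_top.trans ((le_smulSaturation_of_notMem_MSupp hMT').trans
      (smulSaturation_mono le_sup_right))
  · exact (le_smulSaturation_inf (le_top.trans (hS M hMT))).trans
      (smulSaturation_mono le_sup_left)

end Split

/-- If `R ⊆ S` splits at `T` with complement `T'`, then `V ↦ V·T` is an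
order-isomorphism from `[R, T']` onto `[T, S]`. -/
theorem sup_orderIso (T T' : Subalgebra R S)
    (hsplit : MSupp (⊥ : Subalgebra R S) T ∩ MSupp T (⊤ : Subalgebra R S) = ∅)
    (hR : ∀ M ∈ MSupp (⊥ : Subalgebra R S) T, ∀ x ∈ T', ∃ s : R, s ∉ M ∧
      s • x ∈ (⊥ : Subalgebra R S))
    (hS : ∀ M : Ideal R, M.IsMaximal → M ∉ MSupp (⊥ : Subalgebra R S) T →
      ∀ x : S, ∃ s : R, s ∉ M ∧ s • x ∈ T') :
    (∀ U V : Subalgebra R S, U ≤ T' → V ≤ T' → U ⊔ T = V ⊔ T → U = V) ∧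
    (∀ W : Subalgebra R S, T ≤ W → ∃ V : Subalgebra R S, V ≤ T' ∧ V ⊔ T = W) ∧
    (∀ U V : Subalgebra R S, U ≤ T' → V ≤ T' → (U ≤ V ↔ U ⊔ T ≤ V ⊔ T)) := by
  have reflect {U V : Subalgebra R S} (hU : U ≤ T') (h : U ⊔ T ≤ V ⊔ T) : U ≤ V :=
    le_of_sup_le_sup (fun M _ hM x hx => hR M hM x hx) hU h
  refine ⟨fun U V hU hV h => le_antisymm (reflect hU h.le) (reflect hV h.ge), fun W hTW => ?_,
    fun U V hU _ => ⟨fun h => sup_le_sup_right h T, reflect hU⟩⟩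
  exact ⟨W ⊓ T', inf_le_right,
    inf_sup_eq_of_le hsplit (fun M hM hMT x _ => hS M hM hMT x) hTW⟩
end

section
/- Let R ⊆ S be a ring extension and suppose that for a subset X of MSupp_R(S/R) there exists a splitter T = σ(X), i.e., an intermediate ring T with MSupp_R(T/R) = X and MSupp_R(S/T) = X^c (the complement of X in MSupp_R(S/R)). Then [R, T] = { U ∈ [R,S] : MSupp_R(U/R) ⊆ X } and [T, S] = { U ∈ [R,S] : MSupp_R(S/U) ∩ X = ∅ }. -/
variable {R S : Type*} [CommRing R] [CommRing S] [Algebra R S]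

/-- `T` is the splitter of `R ⊆ S` at `X`: `MSupp(T/R) = X` and `MSupp(S/T)` is the
complement of `X` in `MSupp(S/R)`. -/
def IsSplitter (T : Subalgebra R S) (X : Set (Ideal R)) : Prop :=
  MSupp (⊥ : Subalgebra R S) T = X ∧
    MSupp T (⊤ : Subalgebra R S) =
      MSupp (⊥ : Subalgebra R S) (⊤ : Subalgebra R S) \ X

/-! `MSupp A B` is antitone in `A`, monotone in `B`, and vanishes exactly when `B ≤ A`, since
membership in `A` can be tested at the maximal ideals of `R`. For `U` in `[R,S]`, `MSupp T U`
therefore lies both in `MSupp(U/R)` and in `MSupp(S/T) = Xᶜ`, and `MSupp U T` lies both in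
`MSupp(T/R) = X` and in `MSupp(S/U)`. -/

theorem Submodule.mem_of_forall_isMaximal_exists_smul_mem {M : Type*} [AddCommGroup M]
    [Module R M] (N : Submodule R M) {x : M}
    (h : ∀ P : Ideal R, P.IsMaximal → ∃ s ∉ P, s • x ∈ N) : x ∈ N := by
  by_contra hx
  have hproper : N.colon {x} ≠ ⊤ := by
    rwa [Ne, Submodule.colon_eq_top_iff_subset, Set.singleton_subset_iff]
  obtain ⟨P, hP, hle⟩ := Ideal.exists_le_maximal _ hproper
  obtain ⟨s, hsP, hs⟩ := h P hP
  exact hsP (hle (Submodule.mem_colon_singleton.mpr hs))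

theorem mSupp_mono_right {A B B' : Subalgebra R S} (hB : B ≤ B') :
    MSupp A B ⊆ MSupp A B' := by
  rintro P ⟨hP, x, hx, hxA⟩
  exact ⟨hP, x, hB hx, hxA⟩

theorem mSupp_anti_left {A A' B : Subalgebra R S} (hA : A ≤ A') :
    MSupp A' B ⊆ MSupp A B := by
  rintro P ⟨hP, x, hx, hxA'⟩
  exact ⟨hP, x, hx, fun s hs hsx => hxA' s hs (hA hsx)⟩

theorem mSupp_eq_empty_iff {A B : Subalgebra R S} : MSupp A B = ∅ ↔ B ≤ A := by
  refine ⟨fun h x hx => ?_, fun h => ?_⟩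
  · refine Submodule.mem_of_forall_isMaximal_exists_smul_mem (Subalgebra.toSubmodule A)
      fun P hP => ?_
    by_contra! hxP
    exact (Set.eq_empty_iff_forall_notMem.mp h) P ⟨hP, x, hx, hxP⟩
  · refine Set.eq_empty_of_forall_notMem ?_
    rintro P ⟨hP, x, hx, hxA⟩
    exact hxA 1 ((Ideal.ne_top_iff_one P).mp hP.ne_top) (by simpa using h hx)

theorem interval_of_splitter_general (T : Subalgebra R S) (X : Set (Ideal R))
    (hT : IsSplitter T X) :
    (∀ U : Subalgebra R S, U ≤ T ↔ MSupp (⊥ : Subalgebra R S) U ⊆ X) ∧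
    (∀ U : Subalgebra R S, T ≤ U ↔ MSupp U (⊤ : Subalgebra R S) ∩ X = ∅) := by
  obtain ⟨hTR, hST⟩ := hT
  refine ⟨fun U => ⟨fun hUT => hTR ▸ mSupp_mono_right hUT, fun hU => ?_⟩,
    fun U => ⟨fun hTU => ?_, fun hU => ?_⟩⟩
  · rw [← mSupp_eq_empty_iff, ← Set.subset_empty_iff,
      ← Set.inter_sdiff_self X (MSupp (⊥ : Subalgebra R S) ⊤)]
    exact Set.subset_inter ((mSupp_anti_left bot_le).trans hU)
      (hST ▸ mSupp_mono_right le_top)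
  · rw [← Set.subset_empty_iff,
      ← Set.sdiff_inter_self (a := X) (b := MSupp (⊥ : Subalgebra R S) ⊤), ← hST]
    exact Set.inter_subset_inter_left X (mSupp_anti_left hTU)
  · rw [← mSupp_eq_empty_iff, ← Set.subset_empty_iff, ← hU]
    exact Set.subset_inter (mSupp_mono_right le_top) (hTR ▸ mSupp_anti_left bot_le)

/-- For a splitter `T = σ(X)`:
`[R,T] = {U : MSupp(U/R) ⊆ X}` and `[T,S] = {U : MSupp(S/U) ∩ X = ∅}`. -/
theorem interval_of_splitter (T : Subalgebra R S) (X : Set (Ideal R))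
    (hX : X ⊆ MSupp (⊥ : Subalgebra R S) (⊤ : Subalgebra R S))
    (hT : IsSplitter T X) :
    (∀ U : Subalgebra R S, U ≤ T ↔ MSupp (⊥ : Subalgebra R S) U ⊆ X) ∧
    (∀ U : Subalgebra R S, T ≤ U ↔ MSupp U (⊤ : Subalgebra R S) ∩ X = ∅) :=
  interval_of_splitter_general T X hT
end
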